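/- Let Ω ⊂ ℝ^d be a finite measure set, φ ∈ L²(Ω), φ̄ ∈ (0,1), and g nondecreasing with g(1/2) = 0, g(φ) ∈ L¹(Ω). Choose m₁ ≤ 1/2 ≤ m₂ with m₁ < φ̄ < m₂, set η₀ = min{φ̄ − m₁, m₂ − φ̄}, η₁ = max{φ̄ − m₁, m₂ − φ̄}, and let Ω₀ = {m₁ ≤ φ ≤ m₂}. Then η₀ ∫_Ω |g(φ)| dx ≤ (η₀ + η₁) ∫_{Ω₀} |g(φ)| dx + ∫_Ω (φ − φ̄) g(φ) dx. -/

import Mathlib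

open MeasureTheory

/-- Combined estimate: `η₀ ∫_Ω |g(φ)| ≤ (η₀+η₁) ∫_{Ω₀} |g(φ)| + ∫_Ω (φ - φ̄) g(φ)`,
where `Ω₀ = {m₁ ≤ φ ≤ m₂}`, `η₀ = min{φ̄-m₁, m₂-φ̄}`, `η₁ = max{φ̄-m₁, m₂-φ̄}`. -/
theorem stmt_5 {Ω : Type*} [MeasurableSpace Ω] (μ : Measure Ω) [IsFiniteMeasure μ]
    (φ : Ω → ℝ) (hφmeas : Measurable φ) (hφL2 : MemLp φ 2 μ)
    (m₁ m₂ φbar : ℝ) (hm₁half : m₁ ≤ 1/2) (hhalfm₂ : (1/2:ℝ) ≤ m₂)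
    (hbar : φbar ∈ Set.Ioo (0:ℝ) 1) (hbar₁ : m₁ < φbar) (hbar₂ : φbar < m₂)
    (g : ℝ → ℝ) (hg : Monotone g) (hg12 : g (1/2) = 0)
    (hint : Integrable (fun x => g (φ x)) μ)
    (hint' : Integrable (fun x => (φ x - φbar) * g (φ x)) μ) :
    (min (φbar - m₁) (m₂ - φbar)) * ∫ x, |g (φ x)| ∂μ
      ≤ (min (φbar - m₁) (m₂ - φbar) + max (φbar - m₁) (m₂ - φbar)) *
          (∫ x in {x | m₁ ≤ φ x ∧ φ x ≤ m₂}, |g (φ x)| ∂μ)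
        + ∫ x, (φ x - φbar) * g (φ x) ∂μ := by
  set η₀ := min (φbar - m₁) (m₂ - φbar) with hη₀
  set η₁ := max (φbar - m₁) (m₂ - φbar) with hη₁
  set S : Set Ω := {x | m₁ ≤ φ x ∧ φ x ≤ m₂} with hS
  have hSmeas : MeasurableSet S := by
    have : S = φ ⁻¹' Set.Icc m₁ m₂ := rfl
    rw [this]
    exact hφmeas measurableSet_Icc
  have habs : Integrable (fun x => |g (φ x)|) μ := hint.abs
  have hind : Integrable (S.indicator fun x => |g (φ x)|) μ := habs.indicator hSmeas
  have hη₀1 : η₀ ≤ φbar - m₁ := min_le_left _ _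
  have hη₀2 : η₀ ≤ m₂ - φbar := min_le_right _ _
  have key : ∀ x, η₀ * |g (φ x)| - (η₀ + η₁) * S.indicator (fun x => |g (φ x)|) x
      ≤ (φ x - φbar) * g (φ x) := by
    intro x
    by_cases hx : x ∈ S
    · rw [Set.indicator_of_mem hx]
      have h1 : |φ x - φbar| ≤ η₁ := by
        have hA : φbar - m₁ ≤ η₁ := le_max_left _ _
        have hB : m₂ - φbar ≤ η₁ := le_max_right _ _
        have hx1 : m₁ ≤ φ x := hx.1
        have hx2 : φ x ≤ m₂ := hx.2
        rw [abs_le]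
        constructor <;> linarith
      have h2 := neg_abs_le ((φ x - φbar) * g (φ x))
      have h3 : |(φ x - φbar) * g (φ x)| = |φ x - φbar| * |g (φ x)| := abs_mul _ _
      have h4 := mul_le_mul_of_nonneg_right h1 (abs_nonneg (g (φ x)))
      nlinarith [abs_nonneg (g (φ x))]
    · rw [Set.indicator_of_notMem hx]
      have hx' : φ x < m₁ ∨ m₂ < φ x := by
        by_contra h
        push_neg at h
        exact hx h
      rcases hx' with h | h
      · have hgle : g (φ x) ≤ 0 := hg12 ▸ hg (by linarith : φ x ≤ 1/2)
        have habs' : |g (φ x)| = -g (φ x) := abs_of_nonpos hgle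
        rw [habs']
        nlinarith
      · have hgge : 0 ≤ g (φ x) := hg12 ▸ hg (by linarith : (1/2:ℝ) ≤ φ x)
        have habs' : |g (φ x)| = g (φ x) := abs_of_nonneg hgge
        rw [habs']
        nlinarith
  have hL : Integrable (fun x => η₀ * |g (φ x)| -
      (η₀ + η₁) * S.indicator (fun x => |g (φ x)|) x) μ :=
    (habs.const_mul _).sub (hind.const_mul _)
  have hmono := integral_mono hL hint' key
  rw [integral_sub (habs.const_mul _) (hind.const_mul _), integral_const_mul,
    integral_const_mul, integral_indicator hSmeas] at hmono
  linarith
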